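/- arXiv:2409.09347 — 2 statements merged into one kernel-verified Lean document; each statement's English description precedes it below -/
import Mathlib

section
/- Fix s ∈ (0,1), let α, γ : (0,1) → ℝ be differentiable with α(t) ≠ 0 for all t, set c = γ(s)²/α(s)², and let t ∈ (0,1) satisfy γ(t)² − α(t)²·c > 0. Define γ_{t,s} = √(γ(t)² − α(t)²·c). Then 2·γ_{t,s}·(d/dt)γ_{t,s} − 2·γ_{t,s}²·α′(t)/α(t) = 2·γ(t)·γ′(t) − 2·γ(t)²·α′(t)/α(t). In other words, the optimal squared diffusion coefficient (ε*_t)² = 2γ_{t,s}·γ̇_{t,s} − 2γ_{t,s}²·α̇_t/α_t of the interpolation started from an intermediate time s does not depend on s and equals 2γ_t γ̇_t − 2γ_t² α̇_t/α_t. -/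
/-!
Squaring removes the square root: `2 γ_{t,s} γ̇_{t,s} = d/dt γ_{t,s}² = 2 γ γ̇ − 2 c α α̇` with
`c = γ_s²/α_s²`. The operator `f ↦ ḟ − 2 f α̇/α` is linear and annihilates `α²`, so the term
`−c α²` that distinguishes `γ_{t,s}²` from `γ²` drops out, and with it every dependence on `s`.
-/

theorem two_mul_sqrt_mul_deriv_sqrt {f : ℝ → ℝ} {f' x : ℝ} (hf : HasDerivAt f f' x)
    (hx : 0 < f x) : 2 * √(f x) * deriv (fun u => √(f u)) x = f' := by
  rw [(hf.sqrt hx.ne').deriv]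
  field_simp [Real.sqrt_ne_zero'.2 hx]

theorem HasDerivAt.sq_sub_sq_mul_const {α γ : ℝ → ℝ} {a g t : ℝ} (hα : HasDerivAt α a t)
    (hγ : HasDerivAt γ g t) (c : ℝ) :
    HasDerivAt (fun u => γ u ^ 2 - α u ^ 2 * c) (2 * γ t * g - 2 * α t * a * c) t :=
  ((hγ.fun_pow 2).fun_sub ((hα.fun_pow 2).mul_const c)).congr_deriv (by norm_num)

theorem stmt7_general (α γ α' γ' : ℝ → ℝ)
    (hα : ∀ t ∈ Set.Ioo (0 : ℝ) 1, HasDerivAt α (α' t) t)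
    (hγ : ∀ t ∈ Set.Ioo (0 : ℝ) 1, HasDerivAt γ (γ' t) t)
    (s : ℝ)
    (t : ℝ) (ht : t ∈ Set.Ioo (0 : ℝ) 1)
    (hpos : 0 < γ t ^ 2 - α t ^ 2 * (γ s ^ 2 / α s ^ 2)) :
    2 * Real.sqrt (γ t ^ 2 - α t ^ 2 * (γ s ^ 2 / α s ^ 2)) *
        deriv (fun u => Real.sqrt (γ u ^ 2 - α u ^ 2 * (γ s ^ 2 / α s ^ 2))) t -
      2 * (γ t ^ 2 - α t ^ 2 * (γ s ^ 2 / α s ^ 2)) * α' t / α t =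
    2 * γ t * γ' t - 2 * γ t ^ 2 * α' t / α t := by
  set c := γ s ^ 2 / α s ^ 2
  rw [two_mul_sqrt_mul_deriv_sqrt ((hα t ht).sq_sub_sq_mul_const (hγ t ht) c) hpos]
  linear_combination (2 * c) * div_sq_cancel (α t) (α' t)

/-- The optimal squared diffusion coefficient
`2 γ_{t,s} γ̇_{t,s} − 2 γ_{t,s}² α̇_t/α_t`, with
`γ_{t,s} = √(γ(t)² − α(t)² γ(s)²/α(s)²)`, does not depend on `s` and equals
`2 γ_t γ̇_t − 2 γ_t² α̇_t/α_t`. -/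
theorem stmt7 (α γ α' γ' : ℝ → ℝ)
    (hα : ∀ t ∈ Set.Ioo (0 : ℝ) 1, HasDerivAt α (α' t) t)
    (hγ : ∀ t ∈ Set.Ioo (0 : ℝ) 1, HasDerivAt γ (γ' t) t)
    (hα0 : ∀ t ∈ Set.Ioo (0 : ℝ) 1, α t ≠ 0)
    (s : ℝ) (hs : s ∈ Set.Ioo (0 : ℝ) 1)
    (t : ℝ) (ht : t ∈ Set.Ioo (0 : ℝ) 1)
    (hpos : 0 < γ t ^ 2 - α t ^ 2 * (γ s ^ 2 / α s ^ 2)) :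
    2 * Real.sqrt (γ t ^ 2 - α t ^ 2 * (γ s ^ 2 / α s ^ 2)) *
        deriv (fun u => Real.sqrt (γ u ^ 2 - α u ^ 2 * (γ s ^ 2 / α s ^ 2))) t -
      2 * (γ t ^ 2 - α t ^ 2 * (γ s ^ 2 / α s ^ 2)) * α' t / α t =
    2 * γ t * γ' t - 2 * γ t ^ 2 * α' t / α t :=
  stmt7_general α γ α' γ' hα hγ s t ht hpos
end

section
/- Let E be a standard Borel space, let μ and ν be probability measures on E × ℝ^d with ∫‖y‖ dμ(x,y) < ∞ and ∫‖y‖ dν(x,y) < ∞, let a ∈ (0,1), and set κ = (1−a)·μ + a·ν. Then for κ.fst-almost every x ∈ E, writing w(x) = a·(dν.fst/dκ.fst)(x), the conditional means satisfy ∫ y d(κ.condKernel(x))(y) = (1 − w(x))·∫ y d(μ.condKernel(x))(y) + w(x)·∫ y d(ν.condKernel(x))(y). In the paper's notation: E_{(1−a)μ + aν}[X₁ | X_t = x] = (1 − δ̄(x))·E_μ[X₁ | X_t = x] + δ̄(x)·E_ν[X₁ | X_t = x] with δ̄(x) = a·(dν_t/dκ_t)(x). -/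
/-!
If `ρᵢ = ρᵢ.fst ⊗ₘ ηᵢ` and `wᵢ = dρᵢ.fst / d(ρ₁ + ρ₂).fst`, then
`(ρ₁ + ρ₂).fst ⊗ₘ (w₁ • η₁ + w₂ • η₂) = ρ₁ + ρ₂`, so by uniqueness of disintegrations
`(ρ₁ + ρ₂).condKernel = w₁ • η₁ + w₂ • η₂` almost everywhere. For `ρ₁ = (1 - a) • μ` and
`ρ₂ = a • ν` one may take `ηᵢ` to be the conditional kernels of `μ` and `ν`; integrating `y`
against the mixture and using `w₁ + w₂ = 1`, `w₂ = a · dν.fst / dκ.fst` gives the formula.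
-/

open MeasureTheory ProbabilityTheory
open scoped ENNReal NNReal

lemma ENNReal.toReal_eq_one_sub_of_add_eq_one {r₁ r₂ : ℝ≥0∞} (h : r₁ + r₂ = 1) :
    r₁.toReal = 1 - r₂.toReal := by
  have hfin := ENNReal.add_ne_top.1 (h ▸ ENNReal.one_ne_top)
  rw [eq_sub_iff_add_eq, ← ENNReal.toReal_add hfin.1 hfin.2, h, ENNReal.toReal_one]

namespace MeasureTheory.Measure

variable {X Y : Type*} [MeasurableSpace X] [MeasurableSpace Y]

lemma rnDeriv_add_rnDeriv_eq_one (μ₁ μ₂ : Measure X) [IsFiniteMeasure μ₁] [IsFiniteMeasure μ₂] :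
    ∀ᵐ x ∂(μ₁ + μ₂), μ₁.rnDeriv (μ₁ + μ₂) x + μ₂.rnDeriv (μ₁ + μ₂) x = 1 := by
  filter_upwards [rnDeriv_add μ₁ μ₂ (μ₁ + μ₂), rnDeriv_self (μ₁ + μ₂)] with x hadd hself
  rw [← Pi.add_apply, ← hadd, hself]

lemma fst_smul {R : Type*} [SMul R ℝ≥0∞] [IsScalarTower R ℝ≥0∞ ℝ≥0∞] (c : R)
    (ρ : Measure (X × Y)) : (c • ρ).fst = c • ρ.fst :=
  Measure.map_smul c ρ Prod.fst

lemma compProd_withDensity_eq_withDensity_compProd (σ : Measure X) [SFinite σ] (η : Kernel X Y)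
    [IsSFiniteKernel η] {f : X → ℝ≥0∞} [IsSFiniteKernel (η.withDensity fun x _ ↦ f x)]
    (hf : Measurable f) :
    σ ⊗ₘ η.withDensity (fun x _ ↦ f x) = σ.withDensity f ⊗ₘ η := by
  ext s hs
  rw [compProd_apply hs, compProd_apply hs,
    lintegral_withDensity_eq_lintegral_mul _ hf (Kernel.measurable_kernel_prodMk_left hs)]
  congr with x
  rw [Kernel.withDensity_apply (f := fun x _ ↦ f x) _ (hf.comp measurable_fst), withDensity_const]
  rfl

/-- Truncating `dρ.fst/dσ` at `1` changes it only on a `σ`-null set (as `ρ.fst ≤ σ`) and makes the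
reweighted kernel finite, which uniqueness of disintegrations requires. -/
lemma exists_isFiniteKernel_compProd_eq_rnDeriv_smul {σ : Measure X} [IsFiniteMeasure σ]
    {ρ : Measure (X × Y)} [IsFiniteMeasure ρ] (η : Kernel X Y) [IsFiniteKernel η]
    (hρ : ρ.fst ⊗ₘ η = ρ) (hle : ρ.fst ≤ σ) :
    ∃ η' : Kernel X Y, IsFiniteKernel η' ∧ σ ⊗ₘ η' = ρ ∧
      ∀ᵐ x ∂σ, η' x = ρ.fst.rnDeriv σ x • η x := by
  set f : X → ℝ≥0∞ := fun x ↦ min (ρ.fst.rnDeriv σ x) 1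
  have hf : Measurable f := (measurable_rnDeriv _ _).min measurable_const
  have hf_ae : f =ᵐ[σ] ρ.fst.rnDeriv σ := by
    filter_upwards [rnDeriv_le_one_of_le hle] with x hx
    exact min_eq_left hx
  have : IsFiniteKernel (η.withDensity fun x _ ↦ f x) :=
    Kernel.isFiniteKernel_withDensity_of_bounded _ ENNReal.one_ne_top fun _ _ ↦ min_le_right _ _
  refine ⟨η.withDensity (fun x _ ↦ f x), inferInstance, ?_, ?_⟩
  · rw [compProd_withDensity_eq_withDensity_compProd σ η hf, withDensity_congr_ae hf_ae,
      withDensity_rnDeriv_eq _ _ (absolutelyContinuous_of_le hle), hρ]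
  · filter_upwards [hf_ae] with x hx
    rw [Kernel.withDensity_apply (f := fun x _ ↦ f x) _ (hf.comp measurable_fst), withDensity_const,
      hx]

lemma condKernel_add_ae_eq [StandardBorelSpace Y] [Nonempty Y] {ρ₁ ρ₂ : Measure (X × Y)}
    [IsFiniteMeasure ρ₁] [IsFiniteMeasure ρ₂] (η₁ η₂ : Kernel X Y) [IsFiniteKernel η₁]
    [IsFiniteKernel η₂] (h₁ : ρ₁.fst ⊗ₘ η₁ = ρ₁) (h₂ : ρ₂.fst ⊗ₘ η₂ = ρ₂) :
    ∀ᵐ x ∂(ρ₁ + ρ₂).fst, (ρ₁ + ρ₂).condKernel x =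
      ρ₁.fst.rnDeriv (ρ₁ + ρ₂).fst x • η₁ x + ρ₂.fst.rnDeriv (ρ₁ + ρ₂).fst x • η₂ x := by
  obtain ⟨η₁', _, hη₁', hη₁'_ae⟩ := exists_isFiniteKernel_compProd_eq_rnDeriv_smul η₁ h₁
    (σ := (ρ₁ + ρ₂).fst) (by rw [fst_add]; exact Measure.le_add_right le_rfl)
  obtain ⟨η₂', _, hη₂', hη₂'_ae⟩ := exists_isFiniteKernel_compProd_eq_rnDeriv_smul η₂ h₂
    (σ := (ρ₁ + ρ₂).fst) (by rw [fst_add]; exact Measure.le_add_left le_rfl)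
  have hdisint : ρ₁ + ρ₂ = (ρ₁ + ρ₂).fst ⊗ₘ (η₁' + η₂') := by
    rw [compProd_add_right, hη₁', hη₂']
  filter_upwards [eq_condKernel_of_measure_eq_compProd _ hdisint, hη₁'_ae, hη₂'_ae]
    with x hx hx₁ hx₂
  rw [← hx, _root_.add_apply, hx₁, hx₂]

lemma compProd_smul_fst_condKernel [StandardBorelSpace Y] [Nonempty Y] (c : ℝ≥0)
    (ρ : Measure (X × Y)) [IsFiniteMeasure ρ] :
    (c • ρ).fst ⊗ₘ ρ.condKernel = c • ρ := by
  rw [fst_smul, ENNReal.smul_def, ENNReal.smul_def, compProd_smul_left,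
    ρ.disintegrate ρ.condKernel]

lemma integral_add_smul_measure {E : Type*} [NormedAddCommGroup E] [NormedSpace ℝ E]
    {m₁ m₂ : Measure Y} {r₁ r₂ : ℝ≥0∞} {f : Y → E} (hf : Integrable f (r₁ • m₁ + r₂ • m₂)) :
    ∫ y, f y ∂(r₁ • m₁ + r₂ • m₂) = r₁.toReal • ∫ y, f y ∂m₁ + r₂.toReal • ∫ y, f y ∂m₂ := by
  rw [integral_add_measure (integrable_add_measure.1 hf).1 (integrable_add_measure.1 hf).2,
    integral_smul_measure, integral_smul_measure]

end MeasureTheory.Measure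

theorem stmt12_general {E : Type*} [MeasurableSpace E] (d : ℕ)
    (μ ν : Measure (E × EuclideanSpace ℝ (Fin d)))
    [IsProbabilityMeasure μ] [IsProbabilityMeasure ν]
    (hμint : Integrable (fun p => ‖p.2‖) μ)
    (hνint : Integrable (fun p => ‖p.2‖) ν)
    (a : ℝ) (ha : a ∈ Set.Ioo (0 : ℝ) 1) :
    ∀ᵐ x ∂((1 - a).toNNReal • μ + a.toNNReal • ν).fst,
      ∫ y, y ∂(((1 - a).toNNReal • μ + a.toNNReal • ν).condKernel x) =
        (1 - a * (ν.fst.rnDeriv ((1 - a).toNNReal • μ + a.toNNReal • ν).fst x).toReal) •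
            ∫ y, y ∂(μ.condKernel x) +
          (a * (ν.fst.rnDeriv ((1 - a).toNNReal • μ + a.toNNReal • ν).fst x).toReal) •
            ∫ y, y ∂(ν.condKernel x) := by
  set κ := (1 - a).toNNReal • μ + a.toNNReal • ν
  have hmix : ∀ᵐ x ∂κ.fst, κ.condKernel x =
      ((1 - a).toNNReal • μ).fst.rnDeriv κ.fst x • μ.condKernel x +
        (a.toNNReal • ν).fst.rnDeriv κ.fst x • ν.condKernel x :=
    Measure.condKernel_add_ae_eq μ.condKernel ν.condKernel
      (Measure.compProd_smul_fst_condKernel (1 - a).toNNReal μ)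
      (Measure.compProd_smul_fst_condKernel a.toNNReal ν)
  have hweight :
      (a.toNNReal • ν).fst.rnDeriv κ.fst =ᵐ[κ.fst] a.toNNReal • ν.fst.rnDeriv κ.fst := by
    rw [Measure.fst_smul]
    exact Measure.rnDeriv_smul_left _ _ _
  have hsum : ∀ᵐ x ∂κ.fst, ((1 - a).toNNReal • μ).fst.rnDeriv κ.fst x +
      (a.toNNReal • ν).fst.rnDeriv κ.fst x = 1 := by
    simpa only [κ, Measure.fst_add] using Measure.rnDeriv_add_rnDeriv_eq_one
      ((1 - a).toNNReal • μ).fst (a.toNNReal • ν).fst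
  have hint : ∀ᵐ x ∂κ.fst, Integrable (fun y ↦ y) (κ.condKernel x) := by
    have hsnd {ρ : Measure (E × EuclideanSpace ℝ (Fin d))} (h : Integrable (fun p => ‖p.2‖) ρ) :
        Integrable Prod.snd ρ := (integrable_norm_iff measurable_snd.aestronglyMeasurable).1 h
    exact Integrable.condKernel_ae (f := Prod.snd) <|
      ((hsnd hμint).smul_measure ENNReal.coe_ne_top).add_measure
        ((hsnd hνint).smul_measure ENNReal.coe_ne_top)
  filter_upwards [hmix, hweight, hsum, hint] with x hx hwx hsx hix
  have hw :
      ((a.toNNReal • ν).fst.rnDeriv κ.fst x).toReal = a * (ν.fst.rnDeriv κ.fst x).toReal := by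
    rw [hwx, Pi.smul_apply, ENNReal.smul_def, smul_eq_mul, ENNReal.toReal_mul, ENNReal.coe_toReal,
      Real.coe_toNNReal _ ha.1.le]
  rw [hx] at hix ⊢
  rw [Measure.integral_add_smul_measure hix, ENNReal.toReal_eq_one_sub_of_add_eq_one hsx, hw]

/-- Conditional means of a mixture: with `κ = (1−a)μ + aν` on `E × ℝ^d` and
`w(x) = a·(dν.fst/dκ.fst)(x)`, for `κ.fst`-a.e. `x`, the conditional mean of
the second coordinate under `κ` is the `w(x)`-mixture of the conditional
means under `μ` and `ν`. -/
theorem stmt12 {E : Type*} [MeasurableSpace E] [StandardBorelSpace E] (d : ℕ)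
    (μ ν : Measure (E × EuclideanSpace ℝ (Fin d)))
    [IsProbabilityMeasure μ] [IsProbabilityMeasure ν]
    (hμint : Integrable (fun p => ‖p.2‖) μ)
    (hνint : Integrable (fun p => ‖p.2‖) ν)
    (a : ℝ) (ha : a ∈ Set.Ioo (0 : ℝ) 1) :
    ∀ᵐ x ∂((1 - a).toNNReal • μ + a.toNNReal • ν).fst,
      ∫ y, y ∂(((1 - a).toNNReal • μ + a.toNNReal • ν).condKernel x) =
        (1 - a * (ν.fst.rnDeriv ((1 - a).toNNReal • μ + a.toNNReal • ν).fst x).toReal) •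
            ∫ y, y ∂(μ.condKernel x) +
          (a * (ν.fst.rnDeriv ((1 - a).toNNReal • μ + a.toNNReal • ν).fst x).toReal) •
            ∫ y, y ∂(ν.condKernel x) :=
  stmt12_general d μ ν hμint hνint a ha
end
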